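/- Suppose Ψ and Υ are sets of rank-one atoms such that P_Υ^⊥ P_Ψ = P_Ψ P_Υ^⊥, |Ψ| ≤ r, and X ∈ ℂ^{m×n} satisfies P_Υ^⊥ X = 0. Then ‖P_Υ^⊥ P_Ψ A* A P_Ψ X‖_F ≤ √2 · δ_r(A) · ‖P_Ψ X‖_F. -/

import Mathlib

open scoped BigOperators Matrix

/-- Frobenius (trace) inner product on complex matrices: `⟪X, Y⟫ = tr(Yᴴ X)`. -/
noncomputable def frobInner {m n : ℕ} (X Y : Matrix (Fin m) (Fin n) ℂ) : ℂ :=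
  (Yᴴ * X).trace

/-- Frobenius norm of a complex matrix. -/
noncomputable def frobNorm {m n : ℕ} (X : Matrix (Fin m) (Fin n) ℂ) : ℝ :=
  Real.sqrt (∑ i, ∑ j, ‖X i j‖ ^ 2)

/-- Euclidean norm on `ℂ^p`. -/
noncomputable def eNorm {p : ℕ} (v : Fin p → ℂ) : ℝ :=
  Real.sqrt (∑ k, ‖v k‖ ^ 2)

/-- Hermitian inner product on `ℂ^p` (linear in the first argument). -/
noncomputable def eInner {p : ℕ} (u v : Fin p → ℂ) : ℂ :=
  ∑ k, (starRingEnd ℂ) (v k) * u k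

/-- `A` satisfies the rank-`r` restricted isometry inequalities with constant `δ`:
`(1-δ)‖X‖_F² ≤ ‖A X‖₂² ≤ (1+δ)‖X‖_F²` for all `X` with `rank X ≤ r`. -/
def RIPwith {m n p : ℕ} (A : Matrix (Fin m) (Fin n) ℂ →ₗ[ℂ] (Fin p → ℂ)) (r : ℕ) (δ : ℝ) : Prop :=
  ∀ X : Matrix (Fin m) (Fin n) ℂ, X.rank ≤ r →
    (1 - δ) * frobNorm X ^ 2 ≤ eNorm (A X) ^ 2 ∧ eNorm (A X) ^ 2 ≤ (1 + δ) * frobNorm X ^ 2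

/-- `P` is the orthogonal projection onto the span of `S`
with respect to the Frobenius inner product. -/
def IsOrthProjOn {m n : ℕ} (P : Matrix (Fin m) (Fin n) ℂ →ₗ[ℂ] Matrix (Fin m) (Fin n) ℂ)
    (S : Set (Matrix (Fin m) (Fin n) ℂ)) : Prop :=
  (∀ X, P (P X) = P X) ∧ LinearMap.range P = Submodule.span ℂ S ∧
    (∀ X Y, frobInner (P X) Y = frobInner X (P Y))

/-- `B` is the adjoint of `A` w.r.t. the Frobenius and Euclidean inner products. -/
def IsAdjoint {m n p : ℕ} (A : Matrix (Fin m) (Fin n) ℂ →ₗ[ℂ] (Fin p → ℂ))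
    (B : (Fin p → ℂ) →ₗ[ℂ] Matrix (Fin m) (Fin n) ℂ) : Prop :=
  ∀ X v, eInner (A X) v = frobInner X (B v)

/-!
Put `V := P_Ψ X` and `W := P_Υ^⊥ P_Ψ A* A V`. Both lie in `span Ψ`, all of whose elements have
rank at most `|Ψ| ≤ r`, so `A` is a `δ`-isometry on that subspace. `W ⊥ V` because
`P_Υ^⊥ V = P_Ψ P_Υ^⊥ X = 0`, and `‖W‖² = ⟪W, A* A V⟫ = ⟪A W, A V⟫` because `W` is fixed by the
self-adjoint projections `P_Ψ` and `P_Υ^⊥`. For orthogonal `x, y` in a subspace on which `A` is a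
`δ`-isometry, polarization gives `Re ⟪A x, A y⟫ ≤ δ/2 (‖x‖² + ‖y‖²)`; rotating the phase of `y` and
normalising both vectors turns this into `|⟪A x, A y⟫| ≤ δ ‖x‖ ‖y‖`. Hence `‖W‖ ≤ δ ‖V‖`, which is
sharper than `√2 δ ‖V‖`.
-/

open ComplexConjugate

section RestrictedIsometry

open RCLike

variable {𝕜 E F : Type*} [RCLike 𝕜] [NormedAddCommGroup E] [InnerProductSpace 𝕜 E]
  [NormedAddCommGroup F] [InnerProductSpace 𝕜 F]

def IsRestrictedIsometryOn (T : E →ₗ[𝕜] F) (S : Submodule 𝕜 E) (δ : ℝ) : Prop :=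
  ∀ x ∈ S, (1 - δ) * ‖x‖ ^ 2 ≤ ‖T x‖ ^ 2 ∧ ‖T x‖ ^ 2 ≤ (1 + δ) * ‖x‖ ^ 2

namespace IsRestrictedIsometryOn

variable {T : E →ₗ[𝕜] F} {S : Submodule 𝕜 E} {δ : ℝ} (hT : IsRestrictedIsometryOn T S δ)
  {x y : E}
include hT

theorem re_inner_le_of_inner_eq_zero (hx : x ∈ S) (hy : y ∈ S) (hxy : inner 𝕜 x y = 0) :
    re (inner 𝕜 (T x) (T y)) ≤ δ / 2 * (‖x‖ ^ 2 + ‖y‖ ^ 2) := by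
  have hadd := (hT _ (S.add_mem hx hy)).2
  have hsub := (hT _ (S.sub_mem hx hy)).1
  rw [map_add, norm_add_sq (𝕜 := 𝕜), norm_add_sq (𝕜 := 𝕜), hxy] at hadd
  rw [map_sub, norm_sub_sq (𝕜 := 𝕜), norm_sub_sq (𝕜 := 𝕜), hxy] at hsub
  simp only [map_zero, mul_zero, add_zero, sub_zero] at hadd hsub
  linarith

theorem norm_inner_le_of_inner_eq_zero' (hx : x ∈ S) (hy : y ∈ S) (hxy : inner 𝕜 x y = 0) :
    ‖inner 𝕜 (T x) (T y)‖ ≤ δ / 2 * (‖x‖ ^ 2 + ‖y‖ ^ 2) := by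
  set z := inner 𝕜 (T x) (T y)
  rcases eq_or_ne z 0 with hz | hz
  · have hx' := hT x hx
    have hy' := hT y hy
    rw [hz, norm_zero]
    nlinarith [sq_nonneg ‖x‖, sq_nonneg ‖y‖]
  · -- multiplying `y` by the phase `c` of `conj z` makes `⟪T x, T (c • y)⟫ = ‖z‖` real
    set c : 𝕜 := conj z / ‖z‖
    have hc : ‖c‖ = 1 := by simp [c, hz]
    have key := hT.re_inner_le_of_inner_eq_zero hx (S.smul_mem c hy)
      (by rw [inner_smul_right, hxy, mul_zero])
    rwa [map_smul, inner_smul_right, norm_smul, hc, one_mul, div_mul_eq_mul_div,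
      RCLike.conj_mul, ← ofReal_pow, ← ofReal_div, ofReal_re, sq,
      mul_div_cancel_right₀ _ (norm_ne_zero_iff.2 hz)] at key

theorem norm_inner_le_of_inner_eq_zero (hx : x ∈ S) (hy : y ∈ S) (hxy : inner 𝕜 x y = 0) :
    ‖inner 𝕜 (T x) (T y)‖ ≤ δ * ‖x‖ * ‖y‖ := by
  rcases eq_or_ne x 0 with rfl | hx0
  · simp
  rcases eq_or_ne y 0 with rfl | hy0
  · simp
  have hxn : 0 < ‖x‖ := norm_pos_iff.2 hx0
  have hyn : 0 < ‖y‖ := norm_pos_iff.2 hy0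
  have key := hT.norm_inner_le_of_inner_eq_zero' (S.smul_mem (‖x‖⁻¹ : 𝕜) hx)
    (S.smul_mem (‖y‖⁻¹ : 𝕜) hy) (by rw [inner_smul_left, inner_smul_right, hxy]; simp)
  rw [map_smul, map_smul, inner_smul_left, inner_smul_right, norm_mul, norm_mul, norm_smul,
    norm_smul, norm_conj] at key
  simp only [norm_inv, norm_ofReal, abs_norm] at key
  rw [inv_mul_cancel₀ hxn.ne', inv_mul_cancel₀ hyn.ne'] at key
  field_simp at key ⊢
  linarith

end IsRestrictedIsometryOn

end RestrictedIsometry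

section MatrixRank

variable {K ι κ : Type*} [Field K] [Fintype κ]

theorem Matrix.rank_add_le (M N : Matrix ι κ K) : (M + N).rank ≤ M.rank + N.rank := by
  have h : LinearMap.range (M + N).mulVecLin ≤
      LinearMap.range M.mulVecLin ⊔ LinearMap.range N.mulVecLin := by
    rintro _ ⟨v, rfl⟩
    rw [Matrix.mulVecLin_add, LinearMap.add_apply]
    exact Submodule.add_mem_sup (LinearMap.mem_range_self _ v) (LinearMap.mem_range_self _ v)
  exact (Submodule.finrank_mono h).trans (Submodule.finrank_add_le_finrank_add_finrank _ _)

theorem Matrix.rank_smul_le (c : K) (M : Matrix ι κ K) : (c • M).rank ≤ M.rank := by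
  refine Submodule.finrank_mono ?_
  rintro _ ⟨v, rfl⟩
  exact ⟨c • v, by simp⟩

theorem Matrix.rank_sum_le {α : Type*} (s : Finset α) (M : α → Matrix ι κ K) :
    (∑ a ∈ s, M a).rank ≤ ∑ a ∈ s, (M a).rank := by
  classical
  induction s using Finset.induction_on with
  | empty => simp
  | insert a s ha ih =>
    rw [Finset.sum_insert ha, Finset.sum_insert ha]
    exact (Matrix.rank_add_le _ _).trans (Nat.add_le_add_left ih _)

theorem Matrix.rank_le_card_of_mem_span {Ψ : Finset (Matrix ι κ K)} (hΨ : ∀ ψ ∈ Ψ, ψ.rank ≤ 1)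
    {Z : Matrix ι κ K} (hZ : Z ∈ Submodule.span K (Ψ : Set (Matrix ι κ K))) :
    Z.rank ≤ Ψ.card := by
  obtain ⟨f, -, rfl⟩ := Submodule.mem_span_finset.mp hZ
  calc (∑ ψ ∈ Ψ, f ψ • ψ).rank ≤ ∑ ψ ∈ Ψ, (f ψ • ψ).rank := Matrix.rank_sum_le _ _
    _ ≤ ∑ _ψ ∈ Ψ, 1 := Finset.sum_le_sum fun ψ hψ => (Matrix.rank_smul_le _ _).trans (hΨ ψ hψ)
    _ = Ψ.card := by simp

end MatrixRank

section Frobenius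

variable {m n p : ℕ}

def frobEquiv {K ι κ : Type*} [RCLike K] [Fintype ι] [Fintype κ] :
    Matrix ι κ K ≃ₗ[K] EuclideanSpace K (ι × κ) where
  toFun X := WithLp.toLp 2 fun ij => X ij.1 ij.2
  invFun v := Matrix.of fun i j => v (i, j)
  map_add' _ _ := rfl
  map_smul' _ _ := rfl
  left_inv _ := rfl
  right_inv _ := rfl

theorem norm_frobEquiv (X : Matrix (Fin m) (Fin n) ℂ) : ‖frobEquiv X‖ = frobNorm X := by
  rw [EuclideanSpace.norm_eq, frobNorm, Fintype.sum_prod_type]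
  rfl

theorem inner_frobEquiv (X Y : Matrix (Fin m) (Fin n) ℂ) :
    inner ℂ (frobEquiv X) (frobEquiv Y) = frobInner Y X := by
  rw [EuclideanSpace.inner_eq_star_dotProduct, frobInner, Matrix.trace, dotProduct,
    Fintype.sum_prod_type, Finset.sum_comm]
  simp [Matrix.mul_apply, mul_comm]
  rfl

theorem frobInner_self (X : Matrix (Fin m) (Fin n) ℂ) : frobInner X X = (frobNorm X : ℂ) ^ 2 := by
  rw [← inner_frobEquiv, inner_self_eq_norm_sq_to_K, norm_frobEquiv]
  rfl

theorem conj_frobInner (X Y : Matrix (Fin m) (Fin n) ℂ) : conj (frobInner X Y) = frobInner Y X := by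
  rw [← inner_frobEquiv, ← inner_frobEquiv, inner_conj_symm]

theorem frobInner_sub_left (X Y Z : Matrix (Fin m) (Fin n) ℂ) :
    frobInner (X - Y) Z = frobInner X Z - frobInner Y Z := by
  simp only [← inner_frobEquiv, map_sub, inner_sub_right]

theorem frobInner_sub_right (X Y Z : Matrix (Fin m) (Fin n) ℂ) :
    frobInner X (Y - Z) = frobInner X Y - frobInner X Z := by
  simp only [← inner_frobEquiv, map_sub, inner_sub_left]

theorem frobInner_zero_right (X : Matrix (Fin m) (Fin n) ℂ) : frobInner X 0 = 0 := by
  rw [← inner_frobEquiv, map_zero, inner_zero_left]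

theorem frobNorm_nonneg (X : Matrix (Fin m) (Fin n) ℂ) : 0 ≤ frobNorm X :=
  Real.sqrt_nonneg _

theorem norm_toLp_eq_eNorm (v : Fin p → ℂ) : ‖WithLp.toLp 2 v‖ = eNorm v := by
  rw [EuclideanSpace.norm_eq]
  rfl

theorem inner_toLp_eq_eInner (u v : Fin p → ℂ) :
    inner ℂ (WithLp.toLp 2 u : EuclideanSpace ℂ (Fin p)) (WithLp.toLp 2 v) = eInner v u := by
  simp [EuclideanSpace.inner_eq_star_dotProduct, dotProduct, eInner, mul_comm]

end Frobenius

namespace RIPwith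

variable {m n p r : ℕ} {A : Matrix (Fin m) (Fin n) ℂ →ₗ[ℂ] (Fin p → ℂ)} {δ : ℝ}

theorem isRestrictedIsometryOn (hA : RIPwith A r δ) {S : Submodule ℂ (Matrix (Fin m) (Fin n) ℂ)}
    (hS : ∀ Z ∈ S, Z.rank ≤ r) :
    IsRestrictedIsometryOn ((WithLp.linearEquiv 2 ℂ (Fin p → ℂ)).symm.toLinearMap ∘ₗ A ∘ₗ
      frobEquiv.symm.toLinearMap) (S.map frobEquiv.toLinearMap) δ := by
  rintro _ ⟨Z, hZ, rfl⟩
  simpa [norm_frobEquiv, norm_toLp_eq_eNorm] using hA Z (hS Z hZ)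

theorem norm_eInner_le (hA : RIPwith A r δ) {S : Submodule ℂ (Matrix (Fin m) (Fin n) ℂ)}
    (hS : ∀ Z ∈ S, Z.rank ≤ r) {U V : Matrix (Fin m) (Fin n) ℂ} (hU : U ∈ S) (hV : V ∈ S)
    (hUV : frobInner U V = 0) :
    ‖eInner (A U) (A V)‖ ≤ δ * frobNorm U * frobNorm V := by
  have h := (hA.isRestrictedIsometryOn hS).norm_inner_le_of_inner_eq_zero
    (Submodule.mem_map_of_mem hV) (Submodule.mem_map_of_mem hU)
    (by rw [LinearEquiv.coe_coe, inner_frobEquiv, hUV])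
  simpa [inner_toLp_eq_eInner, norm_frobEquiv, mul_right_comm] using h

end RIPwith

namespace IsOrthProjOn

variable {m n : ℕ} {P : Matrix (Fin m) (Fin n) ℂ →ₗ[ℂ] Matrix (Fin m) (Fin n) ℂ}
  {S : Set (Matrix (Fin m) (Fin n) ℂ)}

theorem mem_span (hP : IsOrthProjOn P S) (X : Matrix (Fin m) (Fin n) ℂ) :
    P X ∈ Submodule.span ℂ S :=
  hP.2.1 ▸ LinearMap.mem_range_self P X

theorem compl_idem (hP : IsOrthProjOn P S) (X : Matrix (Fin m) (Fin n) ℂ) :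
    (X - P X) - P (X - P X) = X - P X := by
  rw [map_sub, hP.1, sub_self, sub_zero]

theorem frobInner_compl (hP : IsOrthProjOn P S) (X Y : Matrix (Fin m) (Fin n) ℂ) :
    frobInner (X - P X) Y = frobInner X (Y - P Y) := by
  rw [frobInner_sub_left, frobInner_sub_right, hP.2.2]

end IsOrthProjOn

theorem rop_perp_proj_general {m n p r : ℕ}
    (A : Matrix (Fin m) (Fin n) ℂ →ₗ[ℂ] (Fin p → ℂ))
    (δ : ℝ) (hδ0 : 0 ≤ δ) (hA : RIPwith A r δ)
    (Astar : (Fin p → ℂ) →ₗ[ℂ] Matrix (Fin m) (Fin n) ℂ) (hadj : IsAdjoint A Astar)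
    (Ψ Υ : Finset (Matrix (Fin m) (Fin n) ℂ))
    (hΨ : ∀ ψ ∈ Ψ, ψ.rank = 1) (hcard : Ψ.card ≤ r)
    (PΨ PΥ : Matrix (Fin m) (Fin n) ℂ →ₗ[ℂ] Matrix (Fin m) (Fin n) ℂ)
    (hPΨ : IsOrthProjOn PΨ (Ψ : Set (Matrix (Fin m) (Fin n) ℂ)))
    (hPΥ : IsOrthProjOn PΥ (Υ : Set (Matrix (Fin m) (Fin n) ℂ)))
    -- `P_Υ^⊥ P_Ψ = P_Ψ P_Υ^⊥`
    (hcomm : ∀ Z, PΨ Z - PΥ (PΨ Z) = PΨ (Z - PΥ Z))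
    (X : Matrix (Fin m) (Fin n) ℂ)
    -- `P_Υ^⊥ X = 0`
    (hX : X - PΥ X = 0) :
    frobNorm (PΨ (Astar (A (PΨ X))) - PΥ (PΨ (Astar (A (PΨ X)))))
      ≤ Real.sqrt 2 * δ * frobNorm (PΨ X) := by
  set V := PΨ X
  set Z := Astar (A V)
  set W := PΨ Z - PΥ (PΨ Z)
  have hV : V ∈ Submodule.span ℂ (Ψ : Set _) := hPΨ.mem_span X
  have hWΨ : W = PΨ (Z - PΥ Z) := hcomm Z
  have hW : W ∈ Submodule.span ℂ (Ψ : Set _) := hWΨ ▸ hPΨ.mem_span _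
  have hWV : frobInner W V = 0 := by
    rw [hPΥ.frobInner_compl, hcomm X, hX, map_zero, frobInner_zero_right]
  have hWW : frobInner Z W = frobInner W W := by
    calc frobInner Z W = frobInner Z (PΨ W) := by rw [hWΨ, hPΨ.1]
      _ = frobInner (PΨ Z) (W - PΥ W) := by rw [hPΥ.compl_idem, hPΨ.2.2]
      _ = frobInner W W := (hPΥ.frobInner_compl _ _).symm
  have hAWV : eInner (A W) (A V) = (frobNorm W : ℂ) ^ 2 := by
    rw [hadj, ← conj_frobInner, hWW, frobInner_self, map_pow, Complex.conj_ofReal]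
  have key := hA.norm_eInner_le (fun _ hZ => (Matrix.rank_le_card_of_mem_span
    (fun ψ hψ => (hΨ ψ hψ).le) hZ).trans hcard) hW hV hWV
  rw [hAWV, norm_pow, Complex.norm_real, Real.norm_eq_abs,
    abs_of_nonneg (frobNorm_nonneg W)] at key
  have hWle : frobNorm W ≤ δ * frobNorm V := by
    rcases (frobNorm_nonneg W).eq_or_lt with hW0 | hW0
    · rw [← hW0]; exact mul_nonneg hδ0 (frobNorm_nonneg V)
    · nlinarith
  calc frobNorm W ≤ δ * frobNorm V := hWle
    _ ≤ Real.sqrt 2 * δ * frobNorm V := by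
      rw [mul_assoc]
      exact le_mul_of_one_le_left (mul_nonneg hδ0 (frobNorm_nonneg V)) Real.one_lt_sqrt_two.le

/-- If `P_Υ^⊥` and `P_Ψ` commute, `P_Υ^⊥ X = 0` and `|Ψ| ≤ r`, then
`‖P_Υ^⊥ P_Ψ A* A P_Ψ X‖_F ≤ √2 δ_r(A) ‖P_Ψ X‖_F`. -/
theorem rop_perp_proj {m n p r : ℕ}
    (A : Matrix (Fin m) (Fin n) ℂ →ₗ[ℂ] (Fin p → ℂ))
    (δ : ℝ) (hδ0 : 0 ≤ δ) (hA : RIPwith A r δ)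
    (Astar : (Fin p → ℂ) →ₗ[ℂ] Matrix (Fin m) (Fin n) ℂ) (hadj : IsAdjoint A Astar)
    (Ψ Υ : Finset (Matrix (Fin m) (Fin n) ℂ))
    (hΨ : ∀ ψ ∈ Ψ, ψ.rank = 1) (hΥ : ∀ ψ ∈ Υ, ψ.rank = 1) (hcard : Ψ.card ≤ r)
    (PΨ PΥ : Matrix (Fin m) (Fin n) ℂ →ₗ[ℂ] Matrix (Fin m) (Fin n) ℂ)
    (hPΨ : IsOrthProjOn PΨ (Ψ : Set (Matrix (Fin m) (Fin n) ℂ)))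
    (hPΥ : IsOrthProjOn PΥ (Υ : Set (Matrix (Fin m) (Fin n) ℂ)))
    -- `P_Υ^⊥ P_Ψ = P_Ψ P_Υ^⊥`
    (hcomm : ∀ Z, PΨ Z - PΥ (PΨ Z) = PΨ (Z - PΥ Z))
    (X : Matrix (Fin m) (Fin n) ℂ)
    -- `P_Υ^⊥ X = 0`
    (hX : X - PΥ X = 0) :
    frobNorm (PΨ (Astar (A (PΨ X))) - PΥ (PΨ (Astar (A (PΨ X)))))
      ≤ Real.sqrt 2 * δ * frobNorm (PΨ X) :=
  rop_perp_proj_general A δ hδ0 hA Astar hadj Ψ Υ hΨ hcard PΨ PΥ hPΨ hPΥ hcomm X hX
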